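/- arXiv:math/0602438 — 2 statements merged into one kernel-verified Lean document; each statement's English description precedes it below -/
import Mathlib

section
/- Let f ∈ ℤ[x₁,…,xₙ] and p a prime. Then |E_f(p²)| ≤ p^{-n} · #{x ∈ (ℤ/pℤ)^n : (∂f/∂xᵢ)(x) = 0 for all i = 1,…,n}, where E_f(p²) := p^{-2n} Σ_{x ∈ (ℤ/p²ℤ)^n} exp(2πi f(x)/p²). -/
/-! Write `x = a + p b` with `a, b ∈ {0, …, p - 1}ⁿ`. Modulo `p²`, Taylor's formula gives
`f (a + p b) ≡ f a + p ∑ᵢ bᵢ ∂ᵢf(a)`, so with `e(t) = exp(2πit)` the sum over `b` factors as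
`e(f(a)/p²) ∏ᵢ ∑_{k < p} e(k ∂ᵢf(a)/p)`. Each factor is `p` or `0` according as `p ∣ ∂ᵢf(a)`
or not, so the sum over `b` vanishes off the critical locus mod `p` and has absolute value `pⁿ`
on it; the triangle inequality over `a` finishes the proof. -/

open Complex Finset

/-- `E f N = N^{-n} · ∑_{x ∈ (ℤ/Nℤ)^n} exp(2πi f(x)/N)`, summing over the
    representatives `0,…,N-1` of each coordinate. -/
noncomputable def expSum {n : ℕ} (f : MvPolynomial (Fin n) ℤ) (N : ℕ) : ℂ :=
  ((N : ℂ)⁻¹) ^ n *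
    ∑ x : Fin n → Fin N,
      Complex.exp (2 * Real.pi * Complex.I *
        (MvPolynomial.eval (fun i => ((x i : ℕ) : ℤ)) f : ℂ) / N)

open MvPolynomial ZMod

theorem MvPolynomial.sq_dvd_eval_add_mul_sub {R σ : Type*} [CommRing R] [Fintype σ]
    [DecidableEq σ] (f : MvPolynomial σ R) (a b : σ → R) (c : R) :
    c ^ 2 ∣ eval (fun i ↦ a i + c * b i) f -
      (eval a f + c * ∑ i, b i * eval a (pderiv i f)) := by
  induction f using MvPolynomial.induction_on with
  | C r => simp
  | add g h hg hh =>
    convert dvd_add hg hh using 1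
    simp only [map_add, mul_add, sum_add_distrib]
    ring
  | mul_X g i hg =>
    have hderiv : ∑ j, b j * eval a (pderiv j (g * X i)) =
        a i * ∑ j, b j * eval a (pderiv j g) + b i * eval a g := by
      simp [pderiv_X, Pi.single_apply, mul_add, sum_add_distrib, mul_sum, apply_ite (eval a),
        mul_left_comm (a i), add_comm]
    rw [map_mul, map_mul, eval_X, eval_X, hderiv]
    convert dvd_add (dvd_mul_of_dvd_left hg (a i + c * b i))
      (dvd_mul_right (c ^ 2) (b i * ∑ j, b j * eval a (pderiv j g))) using 1
    ring

theorem AddChar.map_sum_eq_prod {A M ι : Type*} [AddCommMonoid A] [CommMonoid M]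
    (ψ : AddChar A M) (s : Finset ι) (a : ι → A) : ψ (∑ i ∈ s, a i) = ∏ i ∈ s, ψ (a i) := by
  classical
  induction s using Finset.induction_on with
  | empty => simp
  | insert i s hi ih => rw [sum_insert hi, prod_insert hi, AddChar.map_add_eq_mul, ih]

theorem ZMod.stdAddChar_sq_mul (q : ℕ) [NeZero q] (t : ℤ) :
    stdAddChar (N := q ^ 2) ((q * t : ℤ) : ZMod (q ^ 2)) = stdAddChar (t : ZMod q) := by
  have hq : (q : ℂ) ≠ 0 := Nat.cast_ne_zero.mpr (NeZero.ne q)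
  rw [stdAddChar_coe, stdAddChar_coe]
  congr 1
  push_cast
  field_simp

theorem ZMod.sum_fin_stdAddChar_mul (q : ℕ) [NeZero q] (d : ZMod q) :
    ∑ k : Fin q, stdAddChar ((k : ZMod q) * d) = if d = 0 then (q : ℂ) else 0 := by
  have hk : ∀ k : Fin q, ((k : ℕ) : ZMod q) = finEquiv q k := by
    obtain ⟨m, rfl⟩ : ∃ m, q = m + 1 := Nat.exists_eq_succ_of_ne_zero (NeZero.ne q)
    exact Fin.cast_val_eq_self
  simp only [hk]
  calc _ = ∑ x : ZMod q, stdAddChar (x * d) :=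
        (finEquiv q).toEquiv.sum_comp (fun x ↦ stdAddChar (x * d))
    _ = _ := by rw [AddChar.sum_mulShift d (isPrimitive_stdAddChar q), ZMod.card,
      Nat.cast_ite, Nat.cast_zero]

section

variable {σ : Type*} [Fintype σ] [DecidableEq σ]

theorem ZMod.stdAddChar_eval_add_mul (f : MvPolynomial σ ℤ) (q : ℕ) [NeZero q] (a b : σ → ℤ) :
    stdAddChar (eval (fun i ↦ a i + q * b i) f : ZMod (q ^ 2)) =
      stdAddChar (eval a f : ZMod (q ^ 2)) *
        ∏ i, stdAddChar (b i * eval a (pderiv i f) : ZMod q) := by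
  obtain ⟨m, hm⟩ := sq_dvd_eval_add_mul_sub f a b (q : ℤ)
  have hqm : ((q ^ 2 * m : ℤ) : ZMod (q ^ 2)) = 0 :=
    (ZMod.intCast_zmod_eq_zero_iff_dvd _ _).mpr ⟨m, by push_cast; ring⟩
  rw [sub_eq_iff_eq_add'.mp hm, add_comm, Int.cast_add, Int.cast_add, hqm, zero_add,
    AddChar.map_add_eq_mul, stdAddChar_sq_mul, Int.cast_sum, AddChar.map_sum_eq_prod]
  simp only [Int.cast_mul]

theorem ZMod.sum_stdAddChar_eval_add_mul (f : MvPolynomial σ ℤ) (q : ℕ) [NeZero q] (a : σ → ℤ) :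
    ∑ b : σ → Fin q, stdAddChar (eval (fun i ↦ a i + q * ((b i : ℕ) : ℤ)) f : ZMod (q ^ 2)) =
      stdAddChar (eval a f : ZMod (q ^ 2)) *
        if ∀ i, (q : ℤ) ∣ eval a (pderiv i f) then (q : ℂ) ^ Fintype.card σ else 0 := by
  simp only [stdAddChar_eval_add_mul, Int.cast_natCast]
  rw [← mul_sum, ← Fintype.prod_sum fun i (k : Fin q) ↦
    stdAddChar (((k : ℕ) : ZMod q) * (eval a (pderiv i f) : ZMod q))]
  simp only [sum_fin_stdAddChar_mul, ZMod.intCast_zmod_eq_zero_iff_dvd,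
    Fintype.prod_ite_zero, prod_const, card_univ]

theorem ZMod.norm_sum_stdAddChar_eval_add_mul (f : MvPolynomial σ ℤ) (q : ℕ) [NeZero q]
    (a : σ → ℤ) :
    ‖∑ b : σ → Fin q, stdAddChar (eval (fun i ↦ a i + q * ((b i : ℕ) : ℤ)) f : ZMod (q ^ 2))‖ =
      if ∀ i, (q : ℤ) ∣ eval a (pderiv i f) then (q : ℝ) ^ Fintype.card σ else 0 := by
  rw [sum_stdAddChar_eval_add_mul, norm_mul, AddChar.norm_apply, one_mul, apply_ite norm,
    norm_pow, norm_natCast, norm_zero]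

theorem Fintype.sum_pi_fin_sq {M : Type*} [AddCommMonoid M] (q : ℕ) (g : (σ → ℤ) → M) :
    ∑ x : σ → Fin (q ^ 2), g (fun i ↦ ((x i : ℕ) : ℤ)) =
      ∑ a : σ → Fin q, ∑ b : σ → Fin q, g (fun i ↦ ((a i : ℕ) : ℤ) + q * ((b i : ℕ) : ℤ)) := by
  let e : (σ → Fin q) × (σ → Fin q) ≃ (σ → Fin (q ^ 2)) :=
    (Equiv.arrowProdEquivProdArrow _ _ _).symm.trans
      (Equiv.piCongrRight fun _ ↦ finProdFinEquiv.trans (finCongr (sq q).symm))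
  rw [← e.sum_comp, Fintype.sum_prod_type, sum_comm]
  rfl

end

theorem expSum_eq_sum_stdAddChar {n : ℕ} (f : MvPolynomial (Fin n) ℤ) (N : ℕ) [NeZero N] :
    expSum f N = (N : ℂ)⁻¹ ^ n *
      ∑ x : Fin n → Fin N, stdAddChar (eval (fun i ↦ ((x i : ℕ) : ℤ)) f : ZMod N) := by
  simp only [expSum, stdAddChar_coe]

/-- |E_f(p²)| ≤ p^{-n} · #{x ∈ (ℤ/pℤ)^n : ∇f(x) = 0}, where the 𝔽_p-points of
    the critical locus are counted via representatives in {0,…,p-1}. -/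
theorem abs_expSum_p_sq_le {n : ℕ} (f : MvPolynomial (Fin n) ℤ) (p : ℕ)
    (hp : p.Prime) :
    ‖expSum f (p ^ 2)‖ ≤
      ((p : ℝ)⁻¹) ^ n *
        (Finset.univ.filter (fun x : Fin n → Fin p =>
          ∀ i, (p : ℤ) ∣ MvPolynomial.eval (fun j => ((x j : ℕ) : ℤ))
            (MvPolynomial.pderiv i f))).card := by
  have : NeZero p := ⟨hp.ne_zero⟩
  calc ‖expSum f (p ^ 2)‖
      ≤ ((p : ℝ) ^ 2)⁻¹ ^ n * ∑ a : Fin n → Fin p, ‖∑ b : Fin n → Fin p,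
          stdAddChar (eval (fun i ↦ ((a i : ℕ) : ℤ) + p * ((b i : ℕ) : ℤ)) f : ZMod (p ^ 2))‖ := by
        rw [expSum_eq_sum_stdAddChar,
          Fintype.sum_pi_fin_sq p fun x ↦ stdAddChar (eval x f : ZMod (p ^ 2)),
          norm_mul, norm_pow, norm_inv, norm_natCast, Nat.cast_pow]
        gcongr
        exact norm_sum_le _ _
    _ = ((p : ℝ) ^ 2)⁻¹ ^ n * (#{x : Fin n → Fin p | ∀ i, (p : ℤ) ∣
          eval (fun j ↦ ((x j : ℕ) : ℤ)) (pderiv i f)} * (p : ℝ) ^ n) := by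
        simp only [norm_sum_stdAddChar_eval_add_mul, Fintype.card_fin, ← sum_filter, sum_const,
          nsmul_eq_mul]
    _ = _ := by
        have hp0 : (p : ℝ) ≠ 0 := Nat.cast_ne_zero.mpr hp.ne_zero
        rw [mul_left_comm, ← mul_pow, sq, mul_inv, mul_assoc, inv_mul_cancel₀ hp0, mul_one,
          mul_comm]
end

section
/- Let f ∈ ℤ[x₁,…,xₙ], p a prime, and suppose #{x ∈ (ℤ/pℤ)^n : ∇f(x) = 0} ≤ D·p^{δ} for some real D ≥ 0 and integer δ with 0 ≤ δ ≤ n. Then |E_f(p²)| ≤ D·p^{2·(δ-n)/2} = D·(p²)^{(−n+δ)/2}. -/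
/-!
Write `x ∈ (ℤ/p²ℤ)ⁿ` as `x = b + p a` with `a, b ∈ (ℤ/pℤ)ⁿ`. Taylor expansion gives
`f(b + p a) ≡ f(b) + p ⟨a, ∇f(b)⟩ (mod p²)`, so summing over `a` first produces the character
sum `∑ₐ e(⟨a, ∇f(b)⟩ / p)`, where `e(t) = exp(2πit)`, which is `pⁿ` when `∇f(b) ≡ 0 (mod p)`
and `0` otherwise. Hence `E_f(p²) = p⁻ⁿ ∑_{b critical mod p} e(f(b) / p²)`, and bounding each
term by `1` gives `|E_f(p²)| ≤ p⁻ⁿ · #{b : ∇f(b) ≡ 0} ≤ D p^(δ - n)`.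
-/

open Complex Finset

open MvPolynomial Real

theorem sq_dvd_eval_add_smul_sub {R σ : Type*} [CommRing R] [Fintype σ]
    (f : MvPolynomial σ R) (u v : σ → R) (q : R) :
    q ^ 2 ∣ eval (u + q • v) f - eval u f - q * ∑ i, v i * eval u (pderiv i f) := by
  classical
  induction f using MvPolynomial.induction_on with
  | C a => simp
  | add f g hf hg =>
    convert dvd_add hf hg using 1
    simp only [map_add, mul_add, Finset.sum_add_distrib]
    ring
  | mul_X f j hf =>
    obtain ⟨k, hk⟩ := hf
    have hderiv : ∑ i, v i * eval u (pderiv i (f * X j))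
        = (∑ i, v i * eval u (pderiv i f)) * u j + v j * eval u f := by
      simp [pderiv_X, Pi.single_apply, apply_ite (eval u), mul_add, Finset.sum_add_distrib,
        Finset.mul_sum, mul_comm, mul_left_comm, add_comm]
    refine ⟨(∑ i, v i * eval u (pderiv i f)) * v j + k * (u j + q * v j), ?_⟩
    rw [hderiv, map_mul, map_mul, eval_X, eval_X]
    simp only [Pi.add_apply, Pi.smul_apply, smul_eq_mul]
    linear_combination (u j + q * v j) * hk

theorem cexp_two_pi_I_mul_int_div_eq_one_iff {p : ℕ} (hp : p ≠ 0) (c : ℤ) :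
    cexp (2 * π * I * c / p) = 1 ↔ (p : ℤ) ∣ c := by
  have hpC : (p : ℂ) ≠ 0 := Nat.cast_ne_zero.mpr hp
  rw [Complex.exp_eq_one_iff]
  constructor
  · rintro ⟨m, hm⟩
    refine ⟨m, ?_⟩
    have : (c : ℂ) = p * m := by
      field_simp at hm
      linear_combination hm
    exact_mod_cast this
  · rintro ⟨m, rfl⟩
    exact ⟨m, by push_cast; field_simp⟩

theorem sum_fin_cexp_eq_ite {p : ℕ} (hp : p ≠ 0) (c : ℤ) :
    ∑ t : Fin p, cexp (2 * π * I * c * t / p) = if (p : ℤ) ∣ c then (p : ℂ) else 0 := by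
  set ζ := cexp (2 * π * I * c / p)
  have hζp : ζ ^ p = 1 := by
    rw [← Complex.exp_nat_mul, show (p : ℂ) * (2 * π * I * c / p) = c * (2 * π * I) by
      field_simp]
    exact Complex.exp_int_mul_two_pi_mul_I c
  have hpow (t : Fin p) : cexp (2 * π * I * c * t / p) = ζ ^ (t : ℕ) := by
    rw [← Complex.exp_nat_mul]; congr 1; ring
  simp_rw [hpow]
  rw [Fin.sum_univ_eq_sum_range (ζ ^ ·) p]
  split_ifs with h
  · have hζ : ζ = 1 := (cexp_two_pi_I_mul_int_div_eq_one_iff hp c).2 h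
    simp [hζ]
  · rw [geom_sum_eq ((cexp_two_pi_I_mul_int_div_eq_one_iff hp c).not.2 h), hζp, sub_self,
      zero_div]

theorem sum_pi_fin_cexp_eq_ite {ι : Type*} [Fintype ι] [DecidableEq ι] {p : ℕ} (hp : p ≠ 0)
    (c : ι → ℤ) :
    ∑ a : ι → Fin p, cexp (2 * π * I * ((∑ i, (a i : ℤ) * c i : ℤ) : ℂ) / p)
      = if ∀ i, (p : ℤ) ∣ c i then (p : ℂ) ^ Fintype.card ι else 0 := by
  have hprod (a : ι → Fin p) : cexp (2 * π * I * ((∑ i, (a i : ℤ) * c i : ℤ) : ℂ) / p)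
      = ∏ i, cexp (2 * π * I * c i * (a i : ℕ) / p) := by
    rw [← Complex.exp_sum]
    push_cast
    rw [Finset.mul_sum, Finset.sum_div]
    exact congrArg cexp (Finset.sum_congr rfl fun i _ => by ring)
  simp_rw [hprod]
  rw [← Fintype.prod_sum (fun i (t : Fin p) => cexp (2 * π * I * c i * t / p))]
  simp_rw [sum_fin_cexp_eq_ite hp]
  split_ifs with h
  · simp [h]
  · obtain ⟨i, hi⟩ := not_forall.mp h
    exact Finset.prod_eq_zero (Finset.mem_univ i) (if_neg hi)

noncomputable def criticalPointsMod {σ : Type*} [Fintype σ] [DecidableEq σ]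
    (f : MvPolynomial σ ℤ) (p : ℕ) : Finset (σ → Fin p) :=
  univ.filter fun x => ∀ i, (p : ℤ) ∣ eval (fun j => ((x j : ℕ) : ℤ)) (pderiv i f)

theorem cexp_eval_add_smul_div_sq {σ : Type*} [Fintype σ] (f : MvPolynomial σ ℤ) (b a : σ → ℤ)
    {p : ℕ} (hp : p ≠ 0) :
    cexp (2 * π * I * eval (b + (p : ℤ) • a) f / (p : ℂ) ^ 2)
      = cexp (2 * π * I * eval b f / (p : ℂ) ^ 2)
        * cexp (2 * π * I * ((∑ i, a i * eval b (pderiv i f) : ℤ) : ℂ) / p) := by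
  obtain ⟨k, hk⟩ := sq_dvd_eval_add_smul_sub f b a p
  rw [sub_sub, sub_eq_iff_eq_add'] at hk
  have hpC : (p : ℂ) ≠ 0 := Nat.cast_ne_zero.mpr hp
  rw [hk, ← Complex.exp_add, ← mul_one (cexp (_ + _)), ← Complex.exp_int_mul_two_pi_mul_I k,
    ← Complex.exp_add]
  congr 1
  push_cast
  field_simp

theorem sum_pi_fin_cexp_eval_add_smul_eq_ite {σ : Type*} [Fintype σ] [DecidableEq σ]
    (f : MvPolynomial σ ℤ) (b : σ → ℤ) {p : ℕ} (hp : p ≠ 0) :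
    ∑ a : σ → Fin p,
        cexp (2 * π * I * eval (b + (p : ℤ) • fun i => ((a i : ℕ) : ℤ)) f / (p : ℂ) ^ 2)
      = if ∀ i, (p : ℤ) ∣ eval b (pderiv i f)
        then (p : ℂ) ^ Fintype.card σ * cexp (2 * π * I * eval b f / (p : ℂ) ^ 2) else 0 := by
  simp_rw [cexp_eval_add_smul_div_sq f b _ hp]
  rw [← Finset.mul_sum, sum_pi_fin_cexp_eq_ite hp, mul_ite, mul_zero, mul_comm]

theorem sum_pi_fin_mul_eq_sum_sum {ι M : Type*} [Fintype ι] [DecidableEq ι] [AddCommMonoid M]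
    (m k : ℕ) (g : (ι → ℕ) → M) :
    ∑ x : ι → Fin (m * k), g (fun i => x i)
      = ∑ b : ι → Fin k, ∑ a : ι → Fin m, g (fun i => b i + k * a i) := by
  let e : (ι → Fin m) × (ι → Fin k) ≃ (ι → Fin (m * k)) :=
    (Equiv.arrowProdEquivProdArrow ι (fun _ => Fin m) (fun _ => Fin k)).symm.trans
      (Equiv.piCongrRight fun _ => finProdFinEquiv)
  rw [← e.sum_comp, Fintype.sum_prod_type, Finset.sum_comm]
  rfl

theorem expSum_sq_eq_sum_criticalPointsMod {n p : ℕ} (f : MvPolynomial (Fin n) ℤ)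
    (hp : p ≠ 0) :
    expSum f (p ^ 2) = ((p : ℂ) ^ n)⁻¹ * ∑ b ∈ criticalPointsMod f p,
      cexp (2 * π * I * eval (fun i => ((b i : ℕ) : ℤ)) f / (p : ℂ) ^ 2) := by
  have hpC : (p : ℂ) ≠ 0 := Nat.cast_ne_zero.mpr hp
  have hsplit := sum_pi_fin_mul_eq_sum_sum p p
    fun y : Fin n → ℕ => cexp (2 * π * I * eval (fun i => (y i : ℤ)) f / (p : ℂ) ^ 2)
  have hcoord (a b : Fin n → Fin p) : (fun i => (((b i : ℕ) + p * (a i : ℕ) : ℕ) : ℤ))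
      = (fun i => ((b i : ℕ) : ℤ)) + (p : ℤ) • fun i => ((a i : ℕ) : ℤ) := by
    funext i; simp
  simp only [hcoord, sum_pi_fin_cexp_eval_add_smul_eq_ite f _ hp, Fintype.card_fin] at hsplit
  rw [← sq] at hsplit
  rw [expSum, Nat.cast_pow, hsplit, ← Finset.sum_filter, ← Finset.mul_sum, ← mul_assoc]
  congr 1
  · rw [inv_pow, ← pow_mul, mul_comm 2 n, pow_mul, sq, mul_inv,
      inv_mul_cancel_right₀ (pow_ne_zero n hpC)]
  · -- the two filters agree up to their `Decidable` instances
    unfold criticalPointsMod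
    congr

theorem norm_expSum_sq_le_card_div {n p : ℕ} (f : MvPolynomial (Fin n) ℤ) (hp : p ≠ 0) :
    ‖expSum f (p ^ 2)‖ ≤ #(criticalPointsMod f p) / (p : ℝ) ^ n := by
  have hunit (m : ℤ) : ‖cexp (2 * π * I * m / (p : ℂ) ^ 2)‖ = 1 := by
    rw [show 2 * π * I * m / (p : ℂ) ^ 2 = ((2 * π * m / p ^ 2 : ℝ) : ℂ) * I by push_cast; ring]
    exact Complex.norm_exp_ofReal_mul_I _
  rw [expSum_sq_eq_sum_criticalPointsMod f hp, norm_mul, norm_inv, norm_pow, Complex.norm_natCast,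
    div_eq_inv_mul]
  gcongr
  refine (norm_sum_le _ _).trans_eq ?_
  simp [hunit]

theorem sq_rpow_neg_add_div_two {x : ℝ} (hx : 0 < x) (m k : ℕ) :
    (x ^ 2) ^ ((-m + k : ℝ) / 2) = x ^ k / x ^ m := by
  rw [← Real.rpow_natCast x 2, ← Real.rpow_mul hx.le, Nat.cast_ofNat,
    mul_div_cancel₀ _ two_ne_zero, Real.rpow_add hx, Real.rpow_neg hx.le, Real.rpow_natCast,
    Real.rpow_natCast, div_eq_inv_mul]

theorem abs_expSum_p_sq_le_of_card_le_general {n : ℕ} (f : MvPolynomial (Fin n) ℤ) (p : ℕ)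
    (hp : p.Prime) (D : ℝ) (δ : ℕ)
    (hcard : ((Finset.univ.filter (fun x : Fin n → Fin p =>
        ∀ i, (p : ℤ) ∣ MvPolynomial.eval (fun j => ((x j : ℕ) : ℤ))
          (MvPolynomial.pderiv i f))).card : ℝ) ≤ D * (p : ℝ) ^ δ) :
    ‖expSum f (p ^ 2)‖ ≤
      D * ((p : ℝ) ^ 2) ^ (((-n : ℝ) + δ) / 2) := by
  have hcrit : (#(criticalPointsMod f p) : ℝ) ≤ D * (p : ℝ) ^ δ := by
    unfold criticalPointsMod
    convert hcard
  calc ‖expSum f (p ^ 2)‖ ≤ #(criticalPointsMod f p) / (p : ℝ) ^ n :=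
        norm_expSum_sq_le_card_div f hp.ne_zero
    _ ≤ D * (p : ℝ) ^ δ / (p : ℝ) ^ n := by gcongr
    _ = D * ((p : ℝ) ^ 2) ^ (((-n : ℝ) + δ) / 2) := by
        rw [sq_rpow_neg_add_div_two (Nat.cast_pos.mpr hp.pos), mul_div_assoc]

/-- If the number of 𝔽_p-points of the critical locus of f is at most D·p^δ with
    0 ≤ δ ≤ n, then |E_f(p²)| ≤ D·(p²)^{(−n+δ)/2}. -/
theorem abs_expSum_p_sq_le_of_card_le {n : ℕ} (f : MvPolynomial (Fin n) ℤ) (p : ℕ)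
    (hp : p.Prime) (D : ℝ) (hD : 0 ≤ D) (δ : ℕ) (hδ : δ ≤ n)
    (hcard : ((Finset.univ.filter (fun x : Fin n → Fin p =>
        ∀ i, (p : ℤ) ∣ MvPolynomial.eval (fun j => ((x j : ℕ) : ℤ))
          (MvPolynomial.pderiv i f))).card : ℝ) ≤ D * (p : ℝ) ^ δ) :
    ‖expSum f (p ^ 2)‖ ≤
      D * ((p : ℝ) ^ 2) ^ (((-n : ℝ) + δ) / 2) :=
  abs_expSum_p_sq_le_of_card_le_general f p hp D δ hcard
end
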